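/- Let f : ℤ → ℝ satisfy f(τ) = f(τ-1) + I(τ). Suppose additionally that the increments are uniformly bounded: |I(τ)| ≤ M for all τ. Then for any weights α_1,...,α_{T_h} ∈ ℝ with Σ α_k = 1, we have |f(τ) − Σ_{k=1}^{T_h} α_k f(τ-k)| ≤ M · Σ_{k=0}^{T_h-1} |1 − Σ_{j=1}^{k} α_j|. -/

import Mathlib

/-!
Telescoping the recursion writes `f τ - f (τ - k)` as the sum of the last `k` increments.
Since the weights sum to `1`, the prediction error is `∑ₖ αₖ (f τ - f (τ - k))`, and exchanging
the two sums attaches to the increment `I (τ - j)` the tail weight `∑_{j < k ≤ T_h} αₖ = βⱼ`.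
The triangle inequality then bounds the error by `M ∑ⱼ |βⱼ|`.
-/

open Finset

/-- The paper's `β_k`; it is the weight of the increment `I (τ - k)` in the prediction error. -/
def partialSumComplement {R : Type*} [CommRing R] (α : ℕ → R) (k : ℕ) : R :=
  1 - ∑ j ∈ Icc 1 k, α j

theorem sub_sub_eq_sum_range_of_recursion {G : Type*} [AddCommGroup G] {f I : ℤ → G}
    (hrec : ∀ τ, f τ = f (τ - 1) + I τ) (τ : ℤ) (k : ℕ) :
    f τ - f (τ - k) = ∑ j ∈ range k, I (τ - j) := by
  induction k with
  | zero => simp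
  | succ k ih =>
    have hstep := hrec (τ - k)
    rw [sum_range_succ, ← ih, Nat.cast_succ, ← sub_sub, hstep]
    abel

theorem sum_Icc_mul_sum_range_eq_sum_range_mul {R : Type*} [CommSemiring R] (α g : ℕ → R)
    (T : ℕ) :
    ∑ k ∈ Icc 1 T, α k * ∑ j ∈ range k, g j = ∑ j ∈ range T, (∑ k ∈ Ioc j T, α k) * g j := by
  simp_rw [mul_sum, sum_mul]
  refine sum_comm' fun k j => ?_
  simp only [mem_Icc, mem_range, mem_Ioc]
  omega

theorem sum_Ioc_eq_partialSumComplement {R : Type*} [CommRing R] {α : ℕ → R} {T : ℕ}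
    (hα : ∑ k ∈ Icc 1 T, α k = 1) {j : ℕ} (hj : j ≤ T) :
    ∑ k ∈ Ioc j T, α k = partialSumComplement α j := by
  have hIcc (n : ℕ) : Icc 1 n = Ioc 0 n := Icc_add_one_left_eq_Ioc 0 n
  rw [partialSumComplement, ← hα, hIcc, hIcc, ← sum_Ioc_consecutive α (Nat.zero_le j) hj]
  ring

theorem sub_sum_mul_eq_sum_partialSumComplement_mul {R : Type*} [CommRing R] {f I : ℤ → R}
    (hrec : ∀ τ, f τ = f (τ - 1) + I τ) {T : ℕ} {α : ℕ → R}
    (hα : ∑ k ∈ Icc 1 T, α k = 1) (τ : ℤ) :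
    f τ - ∑ k ∈ Icc 1 T, α k * f (τ - k) =
      ∑ j ∈ range T, partialSumComplement α j * I (τ - j) := by
  calc f τ - ∑ k ∈ Icc 1 T, α k * f (τ - k)
      = ∑ k ∈ Icc 1 T, α k * (f τ - f (τ - k)) := by
        simp_rw [mul_sub, sum_sub_distrib, ← sum_mul, hα, one_mul]
    _ = ∑ k ∈ Icc 1 T, α k * ∑ j ∈ range k, I (τ - j) := by
        simp_rw [sub_sub_eq_sum_range_of_recursion hrec]
    _ = ∑ j ∈ range T, partialSumComplement α j * I (τ - j) := by
        rw [sum_Icc_mul_sum_range_eq_sum_range_mul]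
        refine sum_congr rfl fun j hj => ?_
        rw [sum_Ioc_eq_partialSumComplement hα (mem_range.mp hj).le]

theorem abs_sum_mul_le_mul_sum_abs {ι : Type*} (s : Finset ι) (β x : ι → ℝ) {M : ℝ}
    (hx : ∀ i ∈ s, |x i| ≤ M) :
    |∑ i ∈ s, β i * x i| ≤ M * ∑ i ∈ s, |β i| := by
  rw [mul_sum]
  refine (abs_sum_le_sum_abs _ _).trans (sum_le_sum fun i hi => ?_)
  rw [abs_mul, mul_comm]
  exact mul_le_mul_of_nonneg_right (hx i hi) (abs_nonneg _)

theorem lightweather_quantitative_bound_general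
    (f I : ℤ → ℝ) (hrec : ∀ τ : ℤ, f τ = f (τ - 1) + I τ)
    (M : ℝ) (hM : ∀ τ : ℤ, |I τ| ≤ M)
    (T_h : ℕ) (α : ℕ → ℝ)
    (hα : ∑ k ∈ Finset.Icc 1 T_h, α k = 1) :
    ∀ τ : ℤ,
      |f τ - ∑ k ∈ Finset.Icc 1 T_h, α k * f (τ - (k : ℤ))|
        ≤ M * ∑ k ∈ Finset.range T_h, |1 - ∑ j ∈ Finset.Icc 1 k, α j| := by
  intro τ
  rw [sub_sum_mul_eq_sum_partialSumComplement_mul hrec hα τ]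
  exact abs_sum_mul_le_mul_sum_abs _ _ _ fun j _ => hM (τ - j)

/-- Quantitative version of Corollary 1.1 of LightWeather: if the increments
are uniformly bounded by `M`, then the autoregressive prediction error of any
linear combination with weights summing to 1 is bounded by `M` times the
ℓ¹-norm of the cumulative complement weights. -/
theorem lightweather_quantitative_bound
    (f I : ℤ → ℝ) (hrec : ∀ τ : ℤ, f τ = f (τ - 1) + I τ)
    (M : ℝ) (hM : ∀ τ : ℤ, |I τ| ≤ M)
    (T_h : ℕ) (hT : 1 ≤ T_h) (α : ℕ → ℝ)
    (hα : ∑ k ∈ Finset.Icc 1 T_h, α k = 1) :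
    ∀ τ : ℤ,
      |f τ - ∑ k ∈ Finset.Icc 1 T_h, α k * f (τ - (k : ℤ))|
        ≤ M * ∑ k ∈ Finset.range T_h, |1 - ∑ j ∈ Finset.Icc 1 k, α j| :=
  lightweather_quantitative_bound_general f I hrec M hM T_h α hα
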